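/- arXiv:0908.0660 — 2 statements merged into one kernel-verified Lean document; each statement's English description precedes it below -/
import Mathlib

section
/- Let Φ ∈ ℝ^{m×n}, let T ⊆ {1,…,n} with #T = s, and let k ≥ 1. Assume Φ satisfies the RIP of order s+2k with radius δ_{s+2k} ∈ (0,1) and the RIP of order 2k with radius δ_{2k} ∈ (0,1), and that δ_{2k}² + 2δ_{s+2k} < 1. Let x ∈ ℝⁿ be such that #((supp x) \ T) ≤ k, let y = Φx, and let x* solve iBPDN with ε = 0. Then x* = x. -/
open scoped BigOperators

/-- The Euclidean (ℓ₂) norm of a vector. -/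
noncomputable def l2 {d : ℕ} (u : Fin d → ℝ) : ℝ := Real.sqrt (∑ i, (u i) ^ 2)

/-- The ℓ₁ norm of a vector. -/
noncomputable def l1 {d : ℕ} (u : Fin d → ℝ) : ℝ := ∑ i, |u i|

/-- `restr S u` equals `u` on `S` and `0` outside `S`. -/
def restr {n : ℕ} (S : Finset (Fin n)) (u : Fin n → ℝ) : Fin n → ℝ :=
  fun i => if i ∈ S then u i else 0

/-- Restricted Isometry Property of order `q` with radius `δ`. -/
def RIP {m n : ℕ} (Φ : Matrix (Fin m) (Fin n) ℝ) (q : ℕ) (δ : ℝ) : Prop :=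
  ∀ u : Fin n → ℝ, (Function.support u).ncard ≤ q →
    (1 - δ) * (l2 u) ^ 2 ≤ (l2 (Φ.mulVec u)) ^ 2 ∧
    (l2 (Φ.mulVec u)) ^ 2 ≤ (1 + δ) * (l2 u) ^ 2

/-- `xs` solves the innovative Basis Pursuit DeNoise program. -/
def solvesIBPDN {m n : ℕ} (Φ : Matrix (Fin m) (Fin n) ℝ) (y : Fin m → ℝ) (ε : ℝ)
    (T : Finset (Fin n)) (xs : Fin n → ℝ) : Prop :=
  l2 (y - Φ.mulVec xs) ≤ ε ∧
  ∀ u : Fin n → ℝ, l2 (y - Φ.mulVec u) ≤ ε → l1 (restr Tᶜ xs) ≤ l1 (restr Tᶜ u)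

/-- `S` is a set of largest-magnitude entries of `r`. -/
def isLargest {n : ℕ} (r : Fin n → ℝ) (S : Finset (Fin n)) : Prop :=
  ∀ i ∈ S, ∀ j ∉ S, |r j| ≤ |r i|

/-!
With `h = x* - x`, feasibility of `x` gives `Φ h = 0`, and minimality of `x*` gives the cone
constraint `‖h_C‖₁ ≤ ‖h_Δ‖₁`, where `Δ = supp x \ T` and `C = (T ∪ Δ)ᶜ`. Split `C` into blocks
`B₀, B₁, …` of `k` indices in decreasing order of `|hᵢ|`; then
`∑_{j ≥ 1} ‖h_{Bⱼ}‖₂ ≤ ‖h_C‖₁ / √k ≤ ‖h_Δ‖₂`. Expand `0 = ⟪Φ h_E, Φ h⟫` with `E = T ∪ Δ ∪ B₀`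
and bound the cross terms by restricted orthogonality (of order `s + 2k` against `h_{T ∪ Δ}`,
of order `2k` against `h_{B₀}`) to get
`(1 - δ_{s+2k}) ‖h_E‖² ≤ (δ_{s+2k} ‖h_{T ∪ Δ}‖ + δ_{2k} ‖h_{B₀}‖) ‖h_E‖`; by Cauchy–Schwarz the
right side is at most `√(δ_{s+2k}² + δ_{2k}²) ‖h_E‖²`. The condition `δ_{2k}² + 2 δ_{s+2k} < 1`
says exactly that `√(δ_{s+2k}² + δ_{2k}²) < 1 - δ_{s+2k}`, hence `h_E = 0`, and the cone
constraint then kills `h_C`.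
-/

open Finset Matrix

variable {d n : ℕ}

lemma l2_nonneg (u : Fin d → ℝ) : 0 ≤ l2 u := Real.sqrt_nonneg _

lemma sq_l2 (u : Fin d → ℝ) : l2 u ^ 2 = u ⬝ᵥ u := by
  rw [l2, Real.sq_sqrt (by positivity)]
  simp [dotProduct, sq]

lemma l2_eq_zero_iff {u : Fin d → ℝ} : l2 u = 0 ↔ u = 0 := by
  rw [← dotProduct_self_eq_zero, ← sq_l2, sq_eq_zero_iff]

lemma l1_nonneg (u : Fin d → ℝ) : 0 ≤ l1 u := sum_nonneg fun _ _ => abs_nonneg _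

lemma l1_eq_zero_iff {u : Fin d → ℝ} : l1 u = 0 ↔ u = 0 := by
  simp [l1, sum_eq_zero_iff_of_nonneg, funext_iff]

lemma restr_eq_indicator (S : Finset (Fin n)) (u : Fin n → ℝ) :
    restr S u = (S : Set (Fin n)).indicator u := by
  ext i
  simp [restr, Set.indicator_apply]

lemma restr_eq_zero_iff {S : Finset (Fin n)} {u : Fin n → ℝ} :
    restr S u = 0 ↔ ∀ i ∈ S, u i = 0 := by
  simp [restr, funext_iff]

lemma restr_add_restr_compl (S : Finset (Fin n)) (u : Fin n → ℝ) :
    restr S u + restr Sᶜ u = u := by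
  ext i
  by_cases hi : i ∈ S <;> simp [restr, hi]

lemma restr_union {S T : Finset (Fin n)} (hST : Disjoint S T) (u : Fin n → ℝ) :
    restr (S ∪ T) u = restr S u + restr T u := by
  simp only [restr_eq_indicator, coe_union]
  exact Set.indicator_union_of_disjoint (disjoint_coe.2 hST) u

lemma restr_biUnion {ι : Type*} {s : Finset ι} {B : ι → Finset (Fin n)}
    (hB : (s : Set ι).PairwiseDisjoint B) (u : Fin n → ℝ) :
    restr (s.biUnion B) u = ∑ j ∈ s, restr (B j) u := by
  ext i
  simp only [restr_eq_indicator, coe_biUnion, Finset.sum_apply]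
  exact indicator_biUnion_apply s _ (fun a ha b hb hab => disjoint_coe.2 (hB ha hb hab)) i

lemma dotProduct_restr_of_disjoint {S T : Finset (Fin n)} (hST : Disjoint S T)
    (u v : Fin n → ℝ) : restr S u ⬝ᵥ restr T v = 0 := by
  refine sum_eq_zero fun i _ => ?_
  by_cases hi : i ∈ S
  · simp [restr, disjoint_left.1 hST hi]
  · simp [restr, hi]

lemma l1_restr (S : Finset (Fin n)) (u : Fin n → ℝ) : l1 (restr S u) = ∑ i ∈ S, |u i| := by
  simp [l1, restr, apply_ite, sum_ite_mem]

lemma sq_l2_restr (S : Finset (Fin n)) (u : Fin n → ℝ) :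
    l2 (restr S u) ^ 2 = ∑ i ∈ S, u i ^ 2 := by
  rw [sq_l2]
  simp [dotProduct, restr, apply_ite, sum_ite_mem, ← sq]

lemma l2_restr (S : Finset (Fin n)) (u : Fin n → ℝ) :
    l2 (restr S u) = √(∑ i ∈ S, u i ^ 2) := by
  rw [← sq_l2_restr, Real.sqrt_sq (l2_nonneg _)]

lemma l1_restr_biUnion {ι : Type*} {s : Finset ι} {B : ι → Finset (Fin n)}
    (hB : (s : Set ι).PairwiseDisjoint B) (u : Fin n → ℝ) :
    l1 (restr (s.biUnion B) u) = ∑ j ∈ s, l1 (restr (B j) u) := by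
  simp only [l1_restr, sum_biUnion hB]

lemma l2_restr_mono {S T : Finset (Fin n)} (hST : S ⊆ T) (u : Fin n → ℝ) :
    l2 (restr S u) ≤ l2 (restr T u) := by
  rw [l2_restr, l2_restr]
  exact Real.sqrt_le_sqrt (sum_le_sum_of_subset_of_nonneg hST fun _ _ _ => sq_nonneg _)

lemma l1_restr_le_sqrt_card_mul_l2 (S : Finset (Fin n)) (u : Fin n → ℝ) :
    l1 (restr S u) ≤ √(#S : ℝ) * l2 (restr S u) := by
  rw [l1_restr, l2_restr, ← Real.sqrt_mul (Nat.cast_nonneg _)]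
  refine Real.le_sqrt_of_sq_le ?_
  simpa using sq_sum_le_card_mul_sum_sq (s := S) (f := fun i => |u i|)

lemma ncard_support_le_card {S : Finset (Fin n)} {u : Fin n → ℝ} (hu : ∀ i ∉ S, u i = 0) :
    (Function.support u).ncard ≤ #S := by
  rw [← Set.ncard_coe_finset]
  exact Set.ncard_le_ncard (fun i hi => not_not.1 fun h => hi (hu i h)) (Set.toFinite _)

lemma ncard_support_restr_le (S : Finset (Fin n)) (u : Fin n → ℝ) :
    (Function.support (restr S u)).ncard ≤ #S :=
  ncard_support_le_card fun i hi => by simp [restr, hi]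

lemma sq_l2_restr_union {S T : Finset (Fin n)} (hST : Disjoint S T) (u : Fin n → ℝ) :
    l2 (restr (S ∪ T) u) ^ 2 = l2 (restr S u) ^ 2 + l2 (restr T u) ^ 2 := by
  simp only [sq_l2_restr, sum_union hST]

lemma abs_mulVec_restr_dotProduct_le {m q : ℕ} {Φ : Matrix (Fin m) (Fin n) ℝ} {δ : ℝ}
    (hδ : 0 ≤ δ) (hRIP : RIP Φ q δ) {S T : Finset (Fin n)} (hST : Disjoint S T)
    (hcard : #(S ∪ T) ≤ q) (u v : Fin n → ℝ) :
    |Φ *ᵥ restr S u ⬝ᵥ Φ *ᵥ restr T v| ≤ δ * l2 (restr S u) * l2 (restr T v) := by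
  set a := restr S u
  set b := restr T v
  have hab : a ⬝ᵥ b = 0 := dotProduct_restr_of_disjoint hST u v
  have hsupp : ∀ t c : ℝ, (Function.support (t • a + c • b)).ncard ≤ q := fun t c =>
    (ncard_support_le_card (S := S ∪ T) fun i hi => by simp_all [a, b, restr]).trans hcard
  have hnorm : ∀ t c : ℝ, l2 (t • a + c • b) ^ 2 = t ^ 2 * l2 a ^ 2 + c ^ 2 * l2 b ^ 2 := by
    intro t c
    simp only [sq_l2, add_dotProduct, dotProduct_add, smul_dotProduct, dotProduct_smul,
      dotProduct_comm b a, hab, smul_eq_mul]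
    ring
  have hpolar : ∀ t : ℝ, l2 (Φ *ᵥ (t • a + b)) ^ 2 - l2 (Φ *ᵥ (t • a - b)) ^ 2
      = 4 * t * (Φ *ᵥ a ⬝ᵥ Φ *ᵥ b) := by
    intro t
    simp only [sq_l2, mulVec_add, mulVec_sub, mulVec_smul, add_dotProduct,
      dotProduct_add, sub_dotProduct, dotProduct_sub, smul_dotProduct, dotProduct_smul,
      dotProduct_comm (Φ *ᵥ b) (Φ *ᵥ a), smul_eq_mul]
    ring
  -- the RIP at `t • a ± b` makes this quadratic in `t` nonnegative; its discriminant is the claim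
  have hquad : ∀ t : ℝ,
      0 ≤ δ / 2 * l2 a ^ 2 * (t * t) + -(Φ *ᵥ a ⬝ᵥ Φ *ᵥ b) * t + δ / 2 * l2 b ^ 2 := by
    intro t
    have hplus := (hRIP (t • a + (1 : ℝ) • b) (hsupp t 1)).2
    have hminus := (hRIP (t • a + (-1 : ℝ) • b) (hsupp t (-1))).1
    rw [hnorm] at hplus hminus
    simp only [one_smul, neg_smul, ← sub_eq_add_neg] at hplus hminus
    nlinarith [hpolar t]
  have hdisc := discrim_le_zero hquad
  rw [discrim] at hdisc
  refine abs_le_of_sq_le_sq ?_ (mul_nonneg (mul_nonneg hδ (l2_nonneg a)) (l2_nonneg b))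
  nlinarith

lemma exists_subset_card_eq_forall_abs_le (u : Fin n → ℝ) {k : ℕ} {C : Finset (Fin n)}
    (hk : k ≤ #C) : ∃ S ⊆ C, #S = k ∧ ∀ i ∈ C \ S, ∀ a ∈ S, |u i| ≤ |u a| := by
  obtain ⟨S, hS, hmax⟩ := (C.powersetCard k).exists_max_image (fun S => ∑ i ∈ S, |u i|)
    (powersetCard_nonempty.2 hk)
  rw [mem_powersetCard] at hS
  refine ⟨S, hS.1, hS.2, fun i hi a ha => ?_⟩
  rw [mem_sdiff] at hi
  by_contra! hlt
  -- swapping `a` out for `i` would increase the sum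
  have hiS : i ∉ S.erase a := fun h => hi.2 (mem_of_mem_erase h)
  have hswap : insert i (S.erase a) ∈ C.powersetCard k := by
    have := card_pos.2 ⟨a, ha⟩
    refine mem_powersetCard.2 ⟨insert_subset hi.1 ((erase_subset a S).trans hS.1), ?_⟩
    rw [card_insert_of_notMem hiS, card_erase_of_mem ha]
    omega
  have := hmax _ hswap
  rw [sum_insert hiS, sum_erase_eq_sub ha] at this
  linarith

lemma l2_restr_le_l1_restr_div_sqrt {u : Fin n → ℝ} {k : ℕ} {B S : Finset (Fin n)}
    (hk : 0 < k) (hB : #B ≤ k) (hS : #S = k) (hdom : ∀ i ∈ B, ∀ a ∈ S, |u i| ≤ |u a|) :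
    l2 (restr B u) ≤ l1 (restr S u) / √k := by
  set L := l1 (restr S u) with hL
  have hk' : (0 : ℝ) < k := Nat.cast_pos.2 hk
  have hpt : ∀ i ∈ B, |u i| ≤ L / k := by
    intro i hi
    rw [le_div_iff₀ hk', hL, l1_restr]
    calc |u i| * k = ∑ _a ∈ S, |u i| := by simp [hS, mul_comm]
      _ ≤ ∑ a ∈ S, |u a| := sum_le_sum (hdom i hi)
  have hsq : ∑ i ∈ B, u i ^ 2 ≤ L ^ 2 / k :=
    calc ∑ i ∈ B, u i ^ 2 ≤ ∑ _i ∈ B, (L / k) ^ 2 := sum_le_sum fun i hi => by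
          rw [← sq_abs]; exact pow_le_pow_left₀ (abs_nonneg _) (hpt i hi) 2
      _ = #B * (L / k) ^ 2 := by simp
      _ ≤ k * (L / k) ^ 2 := by gcongr
      _ = L ^ 2 / k := by field_simp
  rw [l2_restr, ← Real.sqrt_sq (show 0 ≤ L from l1_nonneg _), ← Real.sqrt_div' _ hk'.le]
  exact Real.sqrt_le_sqrt hsq

structure IsSortedBlocks (u : Fin n → ℝ) (k : ℕ) (C : Finset (Fin n)) (N : ℕ)
    (B : ℕ → Finset (Fin n)) : Prop where
  biUnion_eq : (range (N + 1)).biUnion B = C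
  pairwiseDisjoint : (range (N + 1) : Set ℕ).PairwiseDisjoint B
  card_le : ∀ j, #(B j) ≤ k
  card_eq : ∀ j, (B (j + 1)).Nonempty → #(B j) = k
  abs_le : ∀ j, ∀ i ∈ B (j + 1), ∀ a ∈ B j, |u i| ≤ |u a|

lemma exists_isSortedBlocks (u : Fin n → ℝ) {k : ℕ} (hk : 0 < k) (C : Finset (Fin n)) :
    ∃ N B, IsSortedBlocks u k C N B := by
  induction C using Finset.strongInduction with
  | H C ih =>
  by_cases hC : #C ≤ k
  · refine ⟨0, fun j => if j = 0 then C else ∅, by simp, by simp, fun j => ?_, by simp, by simp⟩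
    split_ifs <;> simp [hC]
  obtain ⟨S, hSC, hS, hdom⟩ := exists_subset_card_eq_forall_abs_le u (not_le.1 hC).le
  have hSne : S.Nonempty := card_pos.1 (hS ▸ hk)
  obtain ⟨N, B, hB⟩ := ih (C \ S) (sdiff_ssubset hSC hSne)
  have hBsub : ∀ j < N + 1, B j ⊆ C \ S := fun j hj =>
    hB.biUnion_eq ▸ subset_biUnion_of_mem B (mem_range.2 hj)
  refine ⟨N + 1, fun j => Nat.casesOn j S B, ?_, ?_, ?_, ?_, ?_⟩
  · rw [range_add_one', biUnion_insert, map_eq_image, image_biUnion]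
    exact (congrArg (S ∪ ·) hB.biUnion_eq).trans (union_sdiff_of_subset hSC)
  · have hSB : ∀ j < N + 1, Disjoint S (B j) := fun j hj =>
      disjoint_sdiff.mono_right (hBsub j hj)
    rintro (_ | i) hi (_ | j) hj hij
    · exact absurd rfl hij
    · exact hSB j (by simpa using hj)
    · exact (hSB i (by simpa using hi)).symm
    · exact hB.pairwiseDisjoint (by simpa using hi) (by simpa using hj) (by omega)
  · rintro (_ | j)
    · exact hS.le
    · exact hB.card_le j
  · rintro (_ | j) hj
    · exact hS
    · exact hB.card_eq j hj
  · rintro (_ | j) i hi a ha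
    · exact hdom i (hBsub 0 (Nat.succ_pos N) hi) a ha
    · exact hB.abs_le j i hi a ha

namespace IsSortedBlocks

variable {u : Fin n → ℝ} {k N : ℕ} {C : Finset (Fin n)} {B : ℕ → Finset (Fin n)}

lemma subset (hB : IsSortedBlocks u k C N B) {j : ℕ} (hj : j < N + 1) : B j ⊆ C :=
  hB.biUnion_eq ▸ subset_biUnion_of_mem B (mem_range.2 hj)

lemma restr_eq_add_sum (hB : IsSortedBlocks u k C N B) (v : Fin n → ℝ) :
    restr C v = restr (B 0) v + ∑ j ∈ range N, restr (B (j + 1)) v := by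
  rw [← hB.biUnion_eq, restr_biUnion hB.pairwiseDisjoint, sum_range_succ', add_comm]

lemma l2_succ_le (hB : IsSortedBlocks u k C N B) (hk : 0 < k) (j : ℕ) :
    l2 (restr (B (j + 1)) u) ≤ l1 (restr (B j) u) / √k := by
  rcases (B (j + 1)).eq_empty_or_nonempty with hempty | hne
  · rw [hempty, restr_eq_zero_iff.2 (by simp), l2_eq_zero_iff.2 rfl]
    exact div_nonneg (l1_nonneg _) (Real.sqrt_nonneg _)
  · exact l2_restr_le_l1_restr_div_sqrt hk (hB.card_le _) (hB.card_eq j hne) (hB.abs_le j)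

lemma sum_l2_le (hB : IsSortedBlocks u k C N B) (hk : 0 < k) :
    ∑ j ∈ range N, l2 (restr (B (j + 1)) u) ≤ l1 (restr C u) / √k :=
  calc ∑ j ∈ range N, l2 (restr (B (j + 1)) u)
      ≤ ∑ j ∈ range N, l1 (restr (B j) u) / √k := sum_le_sum fun j _ => hB.l2_succ_le hk j
    _ ≤ ∑ j ∈ range (N + 1), l1 (restr (B j) u) / √k :=
        sum_le_sum_of_subset_of_nonneg (range_subset_range.2 N.le_succ) fun _ _ _ =>
          div_nonneg (l1_nonneg _) (Real.sqrt_nonneg _)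
    _ = l1 (restr C u) / √k := by
        rw [← sum_div, ← l1_restr_biUnion hB.pairwiseDisjoint, hB.biUnion_eq]

end IsSortedBlocks

lemma one_sub_mul_sq_l2_le {m s k N : ℕ} {Φ : Matrix (Fin m) (Fin n) ℝ} {δsk δk : ℝ}
    (hδsk : 0 ≤ δsk) (hδk : 0 ≤ δk) (hRIPsk : RIP Φ (s + 2 * k) δsk) (hRIPk : RIP Φ (2 * k) δk)
    {h : Fin n → ℝ} (hker : Φ *ᵥ h = 0) {A : Finset (Fin n)} (hA : #A ≤ s + k)
    {B : ℕ → Finset (Fin n)} (hB : IsSortedBlocks h k Aᶜ N B) :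
    (1 - δsk) * l2 (restr (A ∪ B 0) h) ^ 2 ≤
      (δsk * l2 (restr A h) + δk * l2 (restr (B 0) h)) *
        ∑ j ∈ range N, l2 (restr (B (j + 1)) h) := by
  set a := restr A h
  set w := restr (B 0) h
  set v := fun j => restr (B (j + 1)) h
  have hAB : ∀ j < N + 1, Disjoint A (B j) := fun j hj =>
    disjoint_compl_right.mono_right (hB.subset hj)
  have hE : restr (A ∪ B 0) h = a + w := restr_union (hAB 0 N.succ_pos) h
  have hdecomp : h = (a + w) + ∑ j ∈ range N, v j := by
    rw [add_assoc, ← hB.restr_eq_add_sum h, restr_add_restr_compl]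
  have horth :
      Φ *ᵥ (a + w) ⬝ᵥ Φ *ᵥ (a + w) + ∑ j ∈ range N, Φ *ᵥ (a + w) ⬝ᵥ Φ *ᵥ v j = 0 := by
    rw [← dotProduct_sum, ← mulVec_sum, ← dotProduct_add, ← mulVec_add, ← hdecomp, hker,
      dotProduct_zero]
  have hcross : ∀ j ∈ range N, |Φ *ᵥ (a + w) ⬝ᵥ Φ *ᵥ v j| ≤
      (δsk * l2 a + δk * l2 w) * l2 (v j) := by
    intro j hj
    have hj' : j + 1 < N + 1 := by simpa using hj
    have hcardA : #(A ∪ B (j + 1)) ≤ s + 2 * k :=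
      (card_union_le _ _).trans (by linarith [hB.card_le (j + 1)])
    have hcardB : #(B 0 ∪ B (j + 1)) ≤ 2 * k :=
      (card_union_le _ _).trans (by linarith [hB.card_le 0, hB.card_le (j + 1)])
    have h1 := abs_mulVec_restr_dotProduct_le hδsk hRIPsk (hAB (j + 1) hj') hcardA h h
    have h2 := abs_mulVec_restr_dotProduct_le hδk hRIPk
      (hB.pairwiseDisjoint (by simp) (by simpa using hj') (by omega)) hcardB h h
    rw [mulVec_add, add_dotProduct]
    refine (abs_add_le _ _).trans ?_
    linarith
  have hcardE : #(A ∪ B 0) ≤ s + 2 * k :=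
    (card_union_le _ _).trans (by linarith [hB.card_le 0])
  have hlower := (hRIPsk _ ((ncard_support_restr_le _ h).trans hcardE)).1
  rw [hE] at hlower ⊢
  calc (1 - δsk) * l2 (a + w) ^ 2
      ≤ Φ *ᵥ (a + w) ⬝ᵥ Φ *ᵥ (a + w) := by rwa [← sq_l2]
    _ = -∑ j ∈ range N, Φ *ᵥ (a + w) ⬝ᵥ Φ *ᵥ v j := by linarith
    _ ≤ ∑ j ∈ range N, |Φ *ᵥ (a + w) ⬝ᵥ Φ *ᵥ v j| :=
        (neg_le_abs _).trans (abs_sum_le_sum_abs _ _)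
    _ ≤ ∑ j ∈ range N, (δsk * l2 a + δk * l2 w) * l2 (v j) := sum_le_sum hcross
    _ = _ := by rw [mul_sum]

lemma eq_zero_of_one_sub_mul_sq_le {a b P Q G : ℝ} (hG : 0 ≤ G) (hPQ : P ^ 2 + Q ^ 2 = G ^ 2)
    (hab : b ^ 2 + 2 * a < 1) (h : (1 - a) * G ^ 2 ≤ (a * P + b * Q) * G) : G = 0 := by
  by_contra hne
  have hGpos : 0 < G := lt_of_le_of_ne hG (Ne.symm hne)
  have h1 : (1 - a) * G ≤ a * P + b * Q := le_of_mul_le_mul_right (by nlinarith) hGpos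
  have hCS : (a * P + b * Q) ^ 2 ≤ (a ^ 2 + b ^ 2) * G ^ 2 := by
    rw [← hPQ]; nlinarith [sq_nonneg (a * Q - b * P)]
  have h2 : ((1 - a) * G) ^ 2 ≤ (a * P + b * Q) ^ 2 := pow_le_pow_left₀ (by nlinarith) h1 2
  nlinarith [mul_pos (by linarith : 0 < 1 - b ^ 2 - 2 * a) (pow_pos hGpos 2)]

theorem eq_zero_of_mulVec_eq_zero_of_l1_restr_compl_le {m s k : ℕ}
    {Φ : Matrix (Fin m) (Fin n) ℝ} {δsk δk : ℝ} (hk : 0 < k) (hδsk : 0 ≤ δsk) (hδk : 0 ≤ δk)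
    (hRIPsk : RIP Φ (s + 2 * k) δsk) (hRIPk : RIP Φ (2 * k) δk) (hcond : δk ^ 2 + 2 * δsk < 1)
    {h : Fin n → ℝ} (hker : Φ *ᵥ h = 0) {A Δ : Finset (Fin n)} (hA : #A ≤ s + k)
    (hΔA : Δ ⊆ A) (hΔ : #Δ ≤ k) (hcone : l1 (restr Aᶜ h) ≤ l1 (restr Δ h)) : h = 0 := by
  obtain ⟨N, B, hB⟩ := exists_isSortedBlocks h hk Aᶜ
  set G := l2 (restr (A ∪ B 0) h)
  have hk' : (0 : ℝ) < √k := Real.sqrt_pos.2 (Nat.cast_pos.2 hk)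
  have htail : ∑ j ∈ range N, l2 (restr (B (j + 1)) h) ≤ G :=
    calc ∑ j ∈ range N, l2 (restr (B (j + 1)) h)
        ≤ l1 (restr Aᶜ h) / √k := hB.sum_l2_le hk
      _ ≤ l1 (restr Δ h) / √k := by gcongr
      _ ≤ √(#Δ : ℝ) * l2 (restr Δ h) / √k := by
          gcongr; exact l1_restr_le_sqrt_card_mul_l2 Δ h
      _ ≤ √k * l2 (restr Δ h) / √k := by
          gcongr
          exact l2_nonneg _
      _ = l2 (restr Δ h) := by field_simp
      _ ≤ G := l2_restr_mono (hΔA.trans subset_union_left) h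
  have hPQ : l2 (restr A h) ^ 2 + l2 (restr (B 0) h) ^ 2 = G ^ 2 :=
    (sq_l2_restr_union (disjoint_compl_right.mono_right (hB.subset N.succ_pos)) h).symm
  have hG : G = 0 := eq_zero_of_one_sub_mul_sq_le (l2_nonneg _) hPQ hcond <|
    (one_sub_mul_sq_l2_le hδsk hδk hRIPsk hRIPk hker hA hB).trans <|
      mul_le_mul_of_nonneg_left htail <|
        add_nonneg (mul_nonneg hδsk (l2_nonneg _)) (mul_nonneg hδk (l2_nonneg _))
  have hE : ∀ i ∈ A ∪ B 0, h i = 0 := restr_eq_zero_iff.1 (l2_eq_zero_iff.1 hG)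
  have hAc : restr Aᶜ h = 0 := by
    rw [restr_eq_zero_iff.2 fun i hi => hE i (subset_union_left (hΔA hi)),
      l1_eq_zero_iff.2 rfl] at hcone
    exact l1_eq_zero_iff.1 (le_antisymm hcone (l1_nonneg _))
  rw [← restr_add_restr_compl A h, hAc,
    restr_eq_zero_iff.2 fun i hi => hE i (mem_union_left _ hi), add_zero]

lemma l1_restr_compl_union_sub_le {T Δ : Finset (Fin n)} (hTΔ : Disjoint T Δ)
    {x xs : Fin n → ℝ} (hmin : l1 (restr Tᶜ xs) ≤ l1 (restr Tᶜ x))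
    (hx : ∀ i ∉ T ∪ Δ, x i = 0) :
    l1 (restr (T ∪ Δ)ᶜ (xs - x)) ≤ l1 (restr Δ (xs - x)) := by
  have hΔT : Δ ⊆ Tᶜ := fun i hi => mem_compl.2 fun hT => disjoint_left.1 hTΔ hT hi
  have hC : (T ∪ Δ)ᶜ = Tᶜ \ Δ := by ext; simp
  have hx0 : ∀ i ∈ Tᶜ \ Δ, x i = 0 := fun i hi => hx i (by simpa [← hC] using hi)
  have hxC : ∑ i ∈ Tᶜ \ Δ, |x i| = 0 := sum_eq_zero fun i hi => by simp [hx0 i hi]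
  rw [l1_restr, l1_restr, ← sum_sdiff hΔT, ← sum_sdiff hΔT (f := fun i => |x i|), hxC,
    zero_add] at hmin
  rw [l1_restr, l1_restr, hC]
  calc ∑ i ∈ Tᶜ \ Δ, |(xs - x) i| = ∑ i ∈ Tᶜ \ Δ, |xs i| :=
        sum_congr rfl fun i hi => by simp [hx0 i hi]
    _ ≤ ∑ i ∈ Δ, (|x i| - |xs i|) := by rw [sum_sub_distrib]; linarith
    _ ≤ ∑ i ∈ Δ, |(xs - x) i| := sum_le_sum fun i _ => by
        simpa [abs_sub_comm] using abs_sub_abs_le_abs_sub (x i) (xs i)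

/-- **Exact recovery of sparse signals with partially known support by iBPDN
(noiseless case).** -/
theorem ibpdn_exact_recovery
    {m n : ℕ} (Φ : Matrix (Fin m) (Fin n) ℝ)
    (T : Finset (Fin n)) (s k : ℕ) (hs : T.card = s) (hk : 1 ≤ k)
    (δsk δk : ℝ) (hδsk : δsk ∈ Set.Ioo (0 : ℝ) 1) (hδk : δk ∈ Set.Ioo (0 : ℝ) 1)
    (hRIPsk : RIP Φ (s + 2 * k) δsk) (hRIPk : RIP Φ (2 * k) δk)
    (hcond : δk ^ 2 + 2 * δsk < 1)
    (x : Fin n → ℝ) (hx : (Function.support x \ (T : Set (Fin n))).ncard ≤ k)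
    (y : Fin m → ℝ) (hy : y = Φ.mulVec x)
    (xstar : Fin n → ℝ) (hsol : solvesIBPDN Φ y 0 T xstar) :
    xstar = x := by
  obtain ⟨hfeas, hmin⟩ := hsol
  have hker : Φ *ᵥ (xstar - x) = 0 := by
    rw [mulVec_sub, ← hy, ← neg_sub, l2_eq_zero_iff.1 (le_antisymm hfeas (l2_nonneg _)),
      neg_zero]
  set Δ : Finset (Fin n) := ({i | x i ≠ 0} : Finset (Fin n)) \ T
  have hTΔ : Disjoint T Δ := disjoint_left.2 fun i hi hΔ => by simp_all [Δ]
  have hcone := l1_restr_compl_union_sub_le hTΔ (hmin x (by simp [hy, l2_eq_zero_iff.2 rfl]))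
    fun i hi => by simp_all [Δ]
  have hΔ : #Δ ≤ k := by
    rwa [← Set.ncard_coe_finset,
      show (Δ : Set (Fin n)) = Function.support x \ T by ext; simp [Δ]]
  exact sub_eq_zero.1 <| eq_zero_of_mulVec_eq_zero_of_l1_restr_compl_le hk hδsk.1.le hδk.1.le
    hRIPsk hRIPk hcond hker (hs ▸ (card_union_le T Δ).trans (by omega)) subset_union_right hΔ
    hcone
end

section
/- Let Φ ∈ ℝ^{m×n}, T ⊆ {1,…,n}, k ≥ 1, and δ ∈ (0,1). Assume Φ is a δ-stable embedding of (Σ_{2k}, Σ_T), i.e., (1−δ)‖u−v‖₂² ≤ ‖Φu − Φv‖₂² ≤ (1+δ)‖u−v‖₂² for every u ∈ ℝⁿ with at most 2k nonzero entries and every v ∈ ℝⁿ with supp v ⊆ T. Let P : ℝᵐ → ℝᵐ be the orthogonal projection onto the orthogonal complement of the linear span of the columns of Φ indexed by T, and set Φ̃ = P∘Φ. Then for every w ∈ ℝⁿ with supp w ⊆ Tᶜ and at most 2k nonzero entries, (1 − δ/(1−δ))·‖w‖₂² ≤ ‖Φ̃w‖₂² ≤ (1 + δ/(1−δ))·‖w‖₂².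 -/
open scoped BigOperators

/-! Let `p = Φ v`, with `v` supported in `T`, be the projection of `Φ w` onto the span of the
columns indexed by `T`; then `‖P Φ w‖² = ‖Φ w‖² - ‖Φ v‖²` and `⟪Φ w, Φ v⟫ = ‖Φ v‖²`.
As `w ⊥ v`, polarizing the stable embedding at `δ w ± (1 - δ) v` gives
`2δ(1 - δ)‖Φ v‖² ≤ δ(δ²‖w‖² + (1 - δ)²‖v‖²)`, which together with `(1 - δ)‖v‖² ≤ ‖Φ v‖²`
yields `(1 - δ)‖Φ v‖² ≤ δ²‖w‖²`. Combined with `(1 - δ)‖w‖² ≤ ‖Φ w‖² ≤ (1 + δ)‖w‖²`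
this gives both bounds. -/

open scoped InnerProductSpace

section StableEmbedding

variable {E F : Type*} [NormedAddCommGroup E] [InnerProductSpace ℝ E]
  [NormedAddCommGroup F] [InnerProductSpace ℝ F]

def IsStableEmbedding (f : E →ₗ[ℝ] F) (δ : ℝ) (S U : Set E) : Prop :=
  ∀ u ∈ S, ∀ v ∈ U, (1 - δ) * ‖u - v‖ ^ 2 ≤ ‖f u - f v‖ ^ 2 ∧
    ‖f u - f v‖ ^ 2 ≤ (1 + δ) * ‖u - v‖ ^ 2

theorem two_mul_inner_map_le_of_inner_eq_zero (f : E →ₗ[ℝ] F) {δ : ℝ} {a b : E}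
    (hab : ⟪a, b⟫_ℝ = 0) (hadd : ‖f (a + b)‖ ^ 2 ≤ (1 + δ) * ‖a + b‖ ^ 2)
    (hsub : (1 - δ) * ‖a - b‖ ^ 2 ≤ ‖f (a - b)‖ ^ 2) :
    2 * ⟪f a, f b⟫_ℝ ≤ δ * (‖a‖ ^ 2 + ‖b‖ ^ 2) := by
  rw [map_add, norm_add_sq_real, norm_add_sq_real, hab] at hadd
  rw [map_sub, norm_sub_sq_real, norm_sub_sq_real, hab] at hsub
  linarith

namespace IsStableEmbedding

variable {f : E →ₗ[ℝ] F} {δ : ℝ} {S : Set E} {U : Submodule ℝ E}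

theorem norm_sq_map_le_of_mem_left (hf : IsStableEmbedding f δ S U) {u : E} (hu : u ∈ S) :
    ‖f u‖ ^ 2 ≤ (1 + δ) * ‖u‖ ^ 2 := by
  simpa using (hf u hu 0 U.zero_mem).2

theorem le_norm_sq_map_of_mem_left (hf : IsStableEmbedding f δ S U) {u : E} (hu : u ∈ S) :
    (1 - δ) * ‖u‖ ^ 2 ≤ ‖f u‖ ^ 2 := by
  simpa using (hf u hu 0 U.zero_mem).1

theorem le_norm_sq_map_of_mem_right (hf : IsStableEmbedding f δ S U) (h0 : (0 : E) ∈ S) {v : E}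
    (hv : v ∈ U) : (1 - δ) * ‖v‖ ^ 2 ≤ ‖f v‖ ^ 2 := by
  simpa using (hf 0 h0 v hv).1

theorem two_mul_inner_map_le (hf : IsStableEmbedding f δ S U)
    (hS : ∀ c : ℝ, ∀ u ∈ S, c • u ∈ S) {w v : E} (hw : w ∈ S) (hwU : w ∈ Uᗮ) (hv : v ∈ U)
    (s t : ℝ) : 2 * (s * t) * ⟪f w, f v⟫_ℝ ≤ δ * (s ^ 2 * ‖w‖ ^ 2 + t ^ 2 * ‖v‖ ^ 2) := by
  have hsw : s • w ∈ S := hS s w hw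
  have htv : t • v ∈ U := U.smul_mem t hv
  have horth : ⟪s • w, t • v⟫_ℝ = 0 := by
    rw [real_inner_smul_left, real_inner_smul_right, (U.mem_orthogonal' w).1 hwU v hv]
    ring
  have hadd : ‖f (s • w + t • v)‖ ^ 2 ≤ (1 + δ) * ‖s • w + t • v‖ ^ 2 := by
    simpa [sub_neg_eq_add] using (hf _ hsw _ (U.neg_mem htv)).2
  have key := two_mul_inner_map_le_of_inner_eq_zero f horth hadd
    (by simpa using (hf _ hsw _ htv).1)
  rw [map_smul, map_smul, real_inner_smul_left, real_inner_smul_right, norm_smul, norm_smul,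
    mul_pow, mul_pow, Real.norm_eq_abs, Real.norm_eq_abs, sq_abs, sq_abs] at key
  linarith

theorem norm_sq_orthogonalProjection_map_bounds (hf : IsStableEmbedding f δ S U)
    (hδ : δ ∈ Set.Ioo 0 1) (hS : ∀ c : ℝ, ∀ u ∈ S, c • u ∈ S) {K : Submodule ℝ F}
    [K.HasOrthogonalProjection] (hK : K ≤ U.map f) {w : E} (hw : w ∈ S) (hwU : w ∈ Uᗮ) :
    (1 - δ / (1 - δ)) * ‖w‖ ^ 2 ≤ ‖Kᗮ.orthogonalProjectionOnto (f w)‖ ^ 2 ∧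
      ‖Kᗮ.orthogonalProjectionOnto (f w)‖ ^ 2 ≤ (1 + δ / (1 - δ)) * ‖w‖ ^ 2 := by
  obtain ⟨hδ0, hδ1⟩ := hδ
  have h1δ : 0 < 1 - δ := sub_pos.2 hδ1
  have hpK : K.starProjection (f w) ∈ K := K.starProjection_apply_mem (f w)
  obtain ⟨v, hv, hvp⟩ := hK hpK
  have hinner : ⟪f w, f v⟫_ℝ = ‖f v‖ ^ 2 := by
    have := K.starProjection_inner_eq_zero (f w) _ hpK
    rwa [← hvp, inner_sub_left, real_inner_self_eq_norm_sq, sub_eq_zero] at this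
  have hpyth : ‖Kᗮ.orthogonalProjectionOnto (f w)‖ ^ 2 = ‖f w‖ ^ 2 - ‖f v‖ ^ 2 := by
    have := K.norm_sq_eq_add_norm_sq_projection (f w)
    rw [← Submodule.norm_coe, ← K.starProjection_apply, ← hvp] at this
    linarith
  have hcorr := hf.two_mul_inner_map_le hS hw hwU hv δ (1 - δ)
  have hv_lower := hf.le_norm_sq_map_of_mem_right (by simpa using hS 0 w hw) hv
  rw [hinner] at hcorr
  have hproj : ‖f v‖ ^ 2 ≤ δ ^ 2 / (1 - δ) * ‖w‖ ^ 2 := by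
    rw [div_mul_eq_mul_div, le_div_iff₀ h1δ]
    refine le_of_mul_le_mul_left ?_ hδ0
    nlinarith [mul_le_mul_of_nonneg_left hv_lower (mul_nonneg hδ0.le h1δ.le)]
  have hδ_le : δ ≤ δ / (1 - δ) := le_div_self hδ0.le h1δ (by linarith)
  have hcoeff : 1 - δ / (1 - δ) = (1 - δ) - δ ^ 2 / (1 - δ) := by
    field_simp
    ring
  rw [hpyth]
  constructor
  · rw [hcoeff, sub_mul]
    linarith [hf.le_norm_sq_map_of_mem_left hw]
  · linarith [hf.norm_sq_map_le_of_mem_left hw, sq_nonneg ‖f v‖,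
      mul_le_mul_of_nonneg_right hδ_le (sq_nonneg ‖w‖)]

end IsStableEmbedding

end StableEmbedding

section Sparse

variable {ι : Type*} [Fintype ι]

def supportedIn (T : Set ι) : Submodule ℝ (EuclideanSpace ℝ ι) where
  carrier := {v | Function.support v ⊆ T}
  add_mem' {u v} hu hv := by
    rw [Set.mem_ofPred_eq, WithLp.ofLp_add]
    exact (Function.support_add _ _).trans (Set.union_subset hu hv)
  zero_mem' := by simp
  smul_mem' c v hv := by
    rw [Set.mem_ofPred_eq, WithLp.ofLp_smul]
    exact (Function.support_const_smul_subset c _).trans hv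

theorem inner_eq_zero_of_disjoint_support {u v : EuclideanSpace ℝ ι}
    (h : Disjoint (Function.support u) (Function.support v)) : ⟪u, v⟫_ℝ = 0 := by
  rw [PiLp.inner_apply]
  refine Finset.sum_eq_zero fun i _ => ?_
  by_cases hu : u i = 0
  · simp [hu]
  · simp [Function.notMem_support.1 (Set.disjoint_left.1 h hu)]

theorem mem_orthogonal_supportedIn {T : Set ι} {w : EuclideanSpace ℝ ι}
    (hw : Function.support w ⊆ Tᶜ) : w ∈ (supportedIn T)ᗮ :=
  (Submodule.mem_orthogonal' _ _).2 fun _ hv =>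
    inner_eq_zero_of_disjoint_support (Set.disjoint_of_subset_left hw
      (Set.disjoint_compl_left_iff_subset.2 hv))

def sparse (q : ℕ) : Set (EuclideanSpace ℝ ι) := {u | (Function.support u).ncard ≤ q}

theorem smul_mem_sparse (q : ℕ) (c : ℝ) (u : EuclideanSpace ℝ ι) (hu : u ∈ sparse q) :
    c • u ∈ sparse q := by
  change (Function.support (c • u).ofLp).ncard ≤ q
  rw [WithLp.ofLp_smul]
  exact (Set.ncard_le_ncard (Function.support_const_smul_subset c _)).trans hu

end Sparse

theorem span_columns_le_map_supportedIn {ι κ : Type*} [Fintype ι] [DecidableEq ι] [Fintype κ]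
    (Φ : Matrix κ ι ℝ) (T : Finset ι) :
    Submodule.span ℝ {c : EuclideanSpace ℝ κ | ∃ j ∈ T, c = fun i => Φ i j} ≤
      (supportedIn (T : Set ι)).map (Matrix.toLpLin 2 2 Φ) := by
  refine Submodule.span_le.2 ?_
  rintro c ⟨j, hj, hc⟩
  refine ⟨EuclideanSpace.single j 1, ?_, ?_⟩
  · intro i hi
    by_contra hiT
    exact hi (by simp [show i ≠ j by rintro rfl; exact hiT hj])
  · ext i
    simp [hc, Matrix.toLpLin_apply]

theorem l2_eq_norm_toLp {d : ℕ} (u : Fin d → ℝ) :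
    l2 u = ‖(WithLp.toLp 2 u : EuclideanSpace ℝ (Fin d))‖ := by
  simp [l2, EuclideanSpace.norm_eq]

theorem isStableEmbedding_toLpLin {m n : ℕ} (Φ : Matrix (Fin m) (Fin n) ℝ) (T : Set (Fin n))
    (q : ℕ) (δ : ℝ)
    (hemb : ∀ u v : Fin n → ℝ, (Function.support u).ncard ≤ q → Function.support v ⊆ T →
      (1 - δ) * (l2 (u - v)) ^ 2 ≤ (l2 (Φ.mulVec u - Φ.mulVec v)) ^ 2 ∧
      (l2 (Φ.mulVec u - Φ.mulVec v)) ^ 2 ≤ (1 + δ) * (l2 (u - v)) ^ 2) :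
    IsStableEmbedding (Matrix.toLpLin 2 2 Φ) δ (sparse q) (supportedIn T) := by
  intro u hu v hv
  simpa [l2_eq_norm_toLp, Matrix.toLpLin_apply] using hemb u.ofLp v.ofLp hu hv

theorem projected_matrix_stable_embedding_general
    {m n : ℕ} (Φ : Matrix (Fin m) (Fin n) ℝ) (T : Finset (Fin n))
    (k : ℕ) (δ : ℝ) (hδ : δ ∈ Set.Ioo (0 : ℝ) 1)
    (hemb : ∀ u v : Fin n → ℝ, (Function.support u).ncard ≤ 2 * k →
      Function.support v ⊆ (T : Set (Fin n)) →
      (1 - δ) * (l2 (u - v)) ^ 2 ≤ (l2 (Φ.mulVec u - Φ.mulVec v)) ^ 2 ∧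
      (l2 (Φ.mulVec u - Φ.mulVec v)) ^ 2 ≤ (1 + δ) * (l2 (u - v)) ^ 2)
    (V : Submodule ℝ (EuclideanSpace ℝ (Fin m)))
    (hV : V = Submodule.span ℝ
      {c : EuclideanSpace ℝ (Fin m) | ∃ j ∈ T, c = fun i => Φ i j}) :
    ∀ w : Fin n → ℝ, Function.support w ⊆ (Tᶜ : Finset (Fin n)) →
      (Function.support w).ncard ≤ 2 * k →
      (1 - δ / (1 - δ)) * (l2 w) ^ 2 ≤
          ‖Vᗮ.orthogonalProjectionOnto (WithLp.toLp 2 (Φ.mulVec w))‖ ^ 2 ∧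
      ‖Vᗮ.orthogonalProjectionOnto (WithLp.toLp 2 (Φ.mulVec w))‖ ^ 2 ≤
          (1 + δ / (1 - δ)) * (l2 w) ^ 2 := by
  intro w hwT hwk
  have hw : WithLp.toLp 2 w ∈ (supportedIn (T : Set (Fin n)))ᗮ :=
    mem_orthogonal_supportedIn (by simpa using hwT)
  have hK := hV ▸ span_columns_le_map_supportedIn Φ T
  have := (isStableEmbedding_toLpLin Φ T (2 * k) δ hemb).norm_sq_orthogonalProjection_map_bounds
    hδ (smul_mem_sparse (2 * k)) hK hwk hw
  simpa [l2_eq_norm_toLp, Matrix.toLpLin_apply] using this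

/-- **Lemma (Corollary 4 of Davenport et al.):** if `Φ` is a `δ`-stable
embedding of `(Σ_{2k}, Σ_T)`, then `Φ̃ = P ∘ Φ` satisfies the RIP of order `2k`
with radius `δ/(1−δ)` on the vectors supported in `Tᶜ`. -/
theorem projected_matrix_stable_embedding
    {m n : ℕ} (Φ : Matrix (Fin m) (Fin n) ℝ) (T : Finset (Fin n))
    (k : ℕ) (hk : 1 ≤ k) (δ : ℝ) (hδ : δ ∈ Set.Ioo (0 : ℝ) 1)
    (hemb : ∀ u v : Fin n → ℝ, (Function.support u).ncard ≤ 2 * k →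
      Function.support v ⊆ (T : Set (Fin n)) →
      (1 - δ) * (l2 (u - v)) ^ 2 ≤ (l2 (Φ.mulVec u - Φ.mulVec v)) ^ 2 ∧
      (l2 (Φ.mulVec u - Φ.mulVec v)) ^ 2 ≤ (1 + δ) * (l2 (u - v)) ^ 2)
    (V : Submodule ℝ (EuclideanSpace ℝ (Fin m)))
    (hV : V = Submodule.span ℝ
      {c : EuclideanSpace ℝ (Fin m) | ∃ j ∈ T, c = fun i => Φ i j}) :
    ∀ w : Fin n → ℝ, Function.support w ⊆ (Tᶜ : Finset (Fin n)) →
      (Function.support w).ncard ≤ 2 * k →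
      (1 - δ / (1 - δ)) * (l2 w) ^ 2 ≤
          ‖Vᗮ.orthogonalProjectionOnto (WithLp.toLp 2 (Φ.mulVec w))‖ ^ 2 ∧
      ‖Vᗮ.orthogonalProjectionOnto (WithLp.toLp 2 (Φ.mulVec w))‖ ^ 2 ≤
          (1 + δ / (1 - δ)) * (l2 w) ^ 2 :=
  projected_matrix_stable_embedding_general Φ T k δ hδ hemb V hV
end
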